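/- Fix agents N = {1,…,5}, houses H = {h1,…,h5}, endowments e(1) = ½δ_{h1} + ½δ_{h2}, e(2) = ½δ_{h3} + ½δ_{h5}, e(3) = ½δ_{h1} + ½δ_{h4}, e(4) = ½δ_{h2} + ½δ_{h4}, e(5) = ½δ_{h3} + ½δ_{h5}, and the linear-order profile ≿ given by: agent 1: h3 ≻ h1 ≻ h2 ≻ h4 ≻ h5; agent 2: h5 ≻ h1 ≻ h2 ≻ h3 ≻ h4; agent 3: h1 ≻ h4 ≻ h2 ≻ h3 ≻ h5; agent 4: h2 ≻ h4 ≻ h1 ≻ h3 ≻ h5; agent 5: h5 ≻ h3 ≻ h1 ≻ h2 ≻ h4. Then every assignment that is SD-individually rational and SD-efficient with respect to this profile equals z_λ for some λ ∈ [0, ½], where z_λ(1) = λδ_{h1} + (½−λ)δ_{h2} + ½δ_{h3}, z_λ(2) = (½−λ)δ_{h1} + λδ_{h2} + ½δ_{h5}, z_λ(3) = ½δ_{h1} + ½δ_{h4}, z_λ(4) = ½δ_{h2} + ½δ_{h4}, z_λ(5) = ½δ_{h3} + ½δ_{h5}. In particular, in every such assignment agents 3, 4 and 5 receive exactly their endowments.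 -/

import Mathlib

open Finset
open scoped Classical

variable {N H : Type*}

noncomputable section

/-- The total weight that allocation `p` puts on houses weakly preferred to `h`
(with respect to the preference relation `R`, where `R a b` means `a ≿ b`). -/
def upperSum [Fintype H] (R : H → H → Prop) (p : H → ℝ) (h : H) : ℝ :=
  ∑ h' ∈ Finset.univ.filter (fun h' => R h' h), p h'

/-- `p ≿^SD q` (stochastic dominance). -/
def SDge [Fintype H] (R : H → H → Prop) (p q : H → ℝ) : Prop :=
  ∀ h, upperSum R q h ≤ upperSum R p h

/-- `p ≻^SD q`. -/
def SDgt [Fintype H] (R : H → H → Prop) (p q : H → ℝ) : Prop :=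
  SDge R p q ∧ ¬ SDge R q p

/-- Total weight that `p` puts on the indifference class of `h`. -/
def classSum [Fintype H] (R : H → H → Prop) (p : H → ℝ) (h : H) : ℝ :=
  ∑ h' ∈ Finset.univ.filter (fun h' => R h' h ∧ R h h'), p h'

/-- `p ~^DL q`: all indifference-class sums agree. -/
def DLsim [Fintype H] (R : H → H → Prop) (p q : H → ℝ) : Prop :=
  ∀ h, classSum R p h = classSum R q h

/-- `p ≻^DL q`: there is an indifference class (represented by a house `h`) on which
`p` puts strictly more weight, while all strictly more preferred classes have equal sums. -/
def DLgt [Fintype H] (R : H → H → Prop) (p q : H → ℝ) : Prop :=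
  ∃ h, classSum R q h < classSum R p h ∧
    ∀ h', R h' h ∧ ¬ R h h' → classSum R p h' = classSum R q h'

/-- `p ≿^DL q`. -/
def DLge [Fintype H] (R : H → H → Prop) (p q : H → ℝ) : Prop :=
  DLgt R p q ∨ DLsim R p q

/-- An allocation is a nonnegative function on houses. -/
def IsAlloc (p : H → ℝ) : Prop := ∀ h, 0 ≤ p h

/-- A preference is a total preorder (total and transitive relation). -/
def TotalPreorderRel (R : H → H → Prop) : Prop := Total R ∧ Transitive R

/-- An assignment with respect to endowments `e`. -/
def IsAssignment [Fintype N] (e x : N → H → ℝ) : Prop :=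
  (∀ i, IsAlloc (x i)) ∧ ∀ h, ∑ i, x i h = ∑ i, e i h

/-- SD-efficiency. -/
def SDEfficient [Fintype N] [Fintype H] (R : N → H → H → Prop) (e x : N → H → ℝ) : Prop :=
  ¬ ∃ y, IsAssignment e y ∧ (∀ i, SDge (R i) (y i) (x i)) ∧ ∃ i, SDgt (R i) (y i) (x i)

/-- SD individual rationality. -/
def SDIR [Fintype H] (R : N → H → H → Prop) (e x : N → H → ℝ) : Prop :=
  ∀ i, SDge (R i) (x i) (e i)

/-- SD core stability. -/
def SDCoreStable [Fintype N] [Fintype H] (R : N → H → H → Prop) (e x : N → H → ℝ) : Prop :=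
  ¬ ∃ (S : Finset N) (y : N → H → ℝ), S.Nonempty ∧ (∀ i ∈ S, IsAlloc (y i)) ∧
      (∀ h, ∑ i ∈ S, y i h = ∑ i ∈ S, e i h) ∧ ∀ i ∈ S, SDgt (R i) (y i) (x i)

/-- SD strict core membership. -/
def SDStrictCore [Fintype N] [Fintype H] (R : N → H → H → Prop) (e x : N → H → ℝ) : Prop :=
  ¬ ∃ (S : Finset N) (y : N → H → ℝ), S.Nonempty ∧ (∀ i ∈ S, IsAlloc (y i)) ∧
      (∀ h, ∑ i ∈ S, y i h = ∑ i ∈ S, e i h) ∧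
      (∀ i ∈ S, SDge (R i) (y i) (x i)) ∧ ∃ i ∈ S, SDgt (R i) (y i) (x i)

/-- The allocation consisting of exactly one unit of house `h`. -/
def delta [DecidableEq H] (h : H) : H → ℝ := fun h' => if h' = h then 1 else 0

end

/-- A (strict) linear order relation: total, transitive and antisymmetric
(`R a b` means `a ≿ b`). -/
def LinOrderRel (R : H → H → Prop) : Prop := Total R ∧ Transitive R ∧ AntiSymmetric R

/-- Endowments: e(1) = ½δ₁+½δ₂, e(2) = ½δ₃+½δ₅, e(3) = ½δ₁+½δ₄,
e(4) = ½δ₂+½δ₄, e(5) = ½δ₃+½δ₅ (houses h1,…,h5 encoded as 0,…,4). -/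
noncomputable def e5 : Fin 5 → Fin 5 → ℝ :=
  ![![1/2, 1/2, 0, 0, 0],
    ![0, 0, 1/2, 0, 1/2],
    ![1/2, 0, 0, 1/2, 0],
    ![0, 1/2, 0, 1/2, 0],
    ![0, 0, 1/2, 0, 1/2]]

/-- Ranks (0 = best): agent 1: h3≻h1≻h2≻h4≻h5; agent 2: h5≻h1≻h2≻h3≻h4;
agent 3: h1≻h4≻h2≻h3≻h5; agent 4: h2≻h4≻h1≻h3≻h5; agent 5: h5≻h3≻h1≻h2≻h4. -/
def rank13 : Fin 5 → Fin 5 → ℕ :=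
  ![![1, 2, 0, 3, 4], ![1, 2, 3, 4, 0], ![0, 2, 3, 1, 4], ![2, 0, 3, 1, 4], ![2, 3, 1, 4, 0]]

/-- The preference profile. -/
def R13 (i : Fin 5) (h h' : Fin 5) : Prop := rank13 i h ≤ rank13 i h'

/-- The family of assignments z_λ. -/
noncomputable def z13 (l : ℝ) : Fin 5 → Fin 5 → ℝ :=
  ![![l, 1/2 - l, 1/2, 0, 0],
    ![1/2 - l, l, 0, 0, 1/2],
    ![1/2, 0, 0, 1/2, 0],
    ![0, 1/2, 0, 1/2, 0],
    ![0, 0, 1/2, 0, 1/2]]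

/-! Each agent is endowed with one unit and each house has supply one, so SD-individual
rationality, read at an agent's worst house, forces every agent to keep total mass one; read at
the worst house the agent is endowed with, it confines the agent to houses at least as good as
that one. With individual rationality at the favourite houses of agents 2–5 this fixes agents
3, 4, 5 at their endowments and leaves agents 1 and 2 sharing h1, h2, h3 in a two-parameter
family. If agent 2 still holds some h3, agent 1 would swap h2 for it and both gain, so
efficiency forces agent 2's share of h3 to vanish, which leaves exactly the line `z13 λ`. -/

section StochasticDominance

variable {R : H → H → Prop} {p q : H → ℝ}

lemma IsAlloc.add_smul_sub_delta (hp : IsAlloc p) {ε : ℝ} (hε : 0 ≤ ε) {a : H} (hεa : ε ≤ p a)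
    (b : H) : IsAlloc (p + ε • (delta b - delta a)) := by
  intro h
  have := hp h
  simp only [Pi.add_apply, Pi.smul_apply, Pi.sub_apply, delta, smul_eq_mul]
  split_ifs with hb ha <;> subst_vars <;> linarith

variable [Fintype H]

lemma upperSum_of_forall_rel {b : H} (hb : ∀ h, R h b) (p : H → ℝ) :
    upperSum R p b = ∑ h, p h := by
  simp [upperSum, hb]

lemma upperSum_of_rel_iff_eq {t : H} (ht : ∀ h, R h t ↔ h = t) (p : H → ℝ) :
    upperSum R p t = p t := by
  simp [upperSum, ht, sum_filter]

lemma upperSum_add_smul_sub_delta (p : H → ℝ) (ε : ℝ) (a b h : H) :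
    upperSum R (p + ε • (delta b - delta a)) h =
      upperSum R p h + ε * ((if R b h then 1 else 0) - if R a h then 1 else 0) := by
  simp [upperSum, delta, sum_add_distrib, sum_sub_distrib, mul_sub]

lemma SDge.refl (p : H → ℝ) : SDge R p p := fun _ => le_rfl

lemma SDge.sum_le (hpq : SDge R p q) {b : H} (hb : ∀ h, R h b) : ∑ h, q h ≤ ∑ h, p h := by
  simpa only [upperSum_of_forall_rel hb] using hpq b

lemma SDge.apply_le_of_rel_iff_eq (hpq : SDge R p q) {t : H} (ht : ∀ h, R h t ↔ h = t) :
    q t ≤ p t := by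
  simpa only [upperSum_of_rel_iff_eq ht] using hpq t

lemma SDge.eq_zero_of_not_rel (hpq : SDge R p q) (hp : IsAlloc p) (hsum : ∑ h, p h = ∑ h, q h)
    {w : H} (hq : ∀ h, ¬ R h w → q h = 0) {h : H} (hh : ¬ R h w) : p h = 0 := by
  have hp_split := sum_filter_add_sum_filter_not univ (fun h' => R h' w) p
  have hq_split := sum_filter_add_sum_filter_not univ (fun h' => R h' w) q
  have hq_out : ∑ h' ∈ univ.filter (fun h' => ¬ R h' w), q h' = 0 :=
    sum_eq_zero fun h' hh' => hq h' (mem_filter.1 hh').2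
  have hp_out : ∑ h' ∈ univ.filter (fun h' => ¬ R h' w), p h' = 0 :=
    le_antisymm (by have := hpq w; unfold upperSum at this; linarith)
      (sum_nonneg fun h' _ => hp h')
  exact (sum_eq_zero_iff_of_nonneg (fun h' _ => hp h')).1 hp_out h (by simpa using hh)

lemma SDge_add_smul_sub_delta (hR : IsTrans H R) {a b : H} (hba : R b a) {ε : ℝ}
    (hε : 0 ≤ ε) (p : H → ℝ) : SDge R (p + ε • (delta b - delta a)) p := by
  intro h
  rw [upperSum_add_smul_sub_delta]
  have : (if R a h then 1 else 0 : ℝ) ≤ if R b h then 1 else 0 := by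
    split_ifs with ha hb <;> first | exact absurd (hR.trans _ _ _ hba ha) hb | norm_num
  exact le_add_of_nonneg_right (mul_nonneg hε (sub_nonneg.2 this))

lemma SDgt_add_smul_sub_delta (hR : TotalPreorderRel R) {a b : H} (hab : ¬ R a b) {ε : ℝ}
    (hε : 0 < ε) (p : H → ℝ) : SDgt R (p + ε • (delta b - delta a)) p := by
  have hba : R b a := (hR.1 a b).resolve_left hab
  refine ⟨SDge_add_smul_sub_delta ⟨hR.2⟩ hba hε.le p, fun hle => ?_⟩
  have hb := hle b
  rw [upperSum_add_smul_sub_delta, if_pos ((hR.1 b b).elim id id), if_neg hab] at hb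
  linarith

end StochasticDominance

section Assignments

variable [Fintype N] [Fintype H] {R : N → H → H → Prop} {e x : N → H → ℝ}

lemma not_SDEfficient_of_trade (hR : ∀ k, TotalPreorderRel (R k)) (hx : IsAssignment e x)
    {i j : N} (hij : i ≠ j) {a b : H} (hi : ¬ R i a b) (hj : R j a b)
    {ε : ℝ} (hε : 0 < ε) (hεa : ε ≤ x i a) (hεb : ε ≤ x j b) : ¬ SDEfficient R e x := by
  set d := ε • (delta b - delta a)
  set y := x + Pi.single i d - Pi.single j d
  have hyi : y i = x i + d := by simp [y, hij]
  have hyj : y j = x j + ε • (delta a - delta b) := by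
    simp [y, hij.symm, d, sub_eq_add_neg, ← smul_neg]
  have hyk : ∀ k, k ≠ i → k ≠ j → y k = x k := by
    intro k hki hkj
    simp [y, hki, hkj]
  have hy : IsAssignment e y := by
    refine ⟨fun k => ?_, fun h => ?_⟩
    · by_cases hki : k = i
      · subst hki
        rw [hyi]
        exact (hx.1 k).add_smul_sub_delta hε.le hεa b
      by_cases hkj : k = j
      · subst hkj
        rw [hyj]
        exact (hx.1 k).add_smul_sub_delta hε.le hεb a
      rw [hyk k hki hkj]
      exact hx.1 k
    · simp [y, sum_sub_distrib, sum_add_distrib, hx.2 h, Pi.single_apply, ite_apply]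
  refine fun heff => heff ⟨y, hy, fun k => ?_, i, ?_⟩
  · by_cases hki : k = i
    · subst hki
      rw [hyi]
      exact (SDgt_add_smul_sub_delta (hR k) hi hε _).1
    by_cases hkj : k = j
    · subst hkj
      rw [hyj]
      exact SDge_add_smul_sub_delta ⟨(hR k).2⟩ hj hε.le _
    rw [hyk k hki hkj]
    exact SDge.refl _
  · rw [hyi]
    exact SDgt_add_smul_sub_delta (hR i) hi hε _

lemma IsAssignment.sum_eq_of_SDIR (hx : IsAssignment e x) (hbot : ∀ i, ∃ b, ∀ h, R i h b)
    (hir : SDIR R e x) (i : N) : ∑ h, x i h = ∑ h, e i h := by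
  have hle : ∀ k ∈ univ, ∑ h, e k h ≤ ∑ h, x k h := fun k _ =>
    let ⟨_, hb⟩ := hbot k
    (hir k).sum_le hb
  have htotal : ∑ k, ∑ h, e k h = ∑ k, ∑ h, x k h := by
    rw [sum_comm, sum_comm (f := fun k h => x k h)]
    exact sum_congr rfl fun h _ => (hx.2 h).symm
  exact ((sum_eq_sum_iff_of_le hle).1 htotal i (mem_univ i)).symm

end Assignments

lemma R13_totalPreorderRel (i : Fin 5) : TotalPreorderRel (R13 i) :=
  ⟨fun _ _ => le_total _ _, fun _ _ _ => le_trans⟩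

lemma R13_exists_bottom (i : Fin 5) : ∃ b, ∀ h, R13 i h b :=
  Finite.exists_max (rank13 i)

lemma e5_row_sum (i : Fin 5) : ∑ h, e5 i h = 1 := by
  fin_cases i <;> simp [e5, Fin.sum_univ_five] <;> norm_num

lemma e5_col_sum (h : Fin 5) : ∑ i, e5 i h = 1 := by
  fin_cases h <;> simp [e5, Fin.sum_univ_five] <;> norm_num

def worstEndowed13 : Fin 5 → Fin 5 := ![1, 2, 3, 3, 2]

lemma e5_eq_zero_of_not_R13_worstEndowed13 (i h : Fin 5) (hh : ¬ R13 i h (worstEndowed13 i)) :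
    e5 i h = 0 := by
  fin_cases i <;> fin_cases h <;> simp_all [R13, rank13, worstEndowed13, e5]

def favorite13 : Fin 5 → Fin 5 := ![2, 4, 0, 1, 4]

lemma R13_favorite13_iff (i h : Fin 5) : R13 i h (favorite13 i) ↔ h = favorite13 i := by
  unfold R13
  revert i h
  decide

noncomputable def irAssign13 (a b : ℝ) : Fin 5 → Fin 5 → ℝ :=
  ![![a, b, 1 - a - b, 0, 0],
    ![1/2 - a, 1/2 - b, a + b - 1/2, 0, 1/2],
    ![1/2, 0, 0, 1/2, 0],
    ![0, 1/2, 0, 1/2, 0],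
    ![0, 0, 1/2, 0, 1/2]]

lemma exists_eq_irAssign13_of_SDIR {x : Fin 5 → Fin 5 → ℝ} (hx : IsAssignment e5 x)
    (hir : SDIR R13 e5 x) : ∃ a b, x = irAssign13 a b := by
  have hrow (i : Fin 5) : ∑ h, x i h = 1 :=
    (hx.sum_eq_of_SDIR R13_exists_bottom hir i).trans (e5_row_sum i)
  have hcol (h : Fin 5) : ∑ i, x i h = 1 := (hx.2 h).trans (e5_col_sum h)
  have hzero (i h : Fin 5) (hh : ¬ R13 i h (worstEndowed13 i)) : x i h = 0 :=
    (hir i).eq_zero_of_not_rel (hx.1 i) ((hrow i).trans (e5_row_sum i).symm)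
      (e5_eq_zero_of_not_R13_worstEndowed13 i) hh
  have hfav (i : Fin 5) : e5 i (favorite13 i) ≤ x i (favorite13 i) :=
    (hir i).apply_le_of_rel_iff_eq (R13_favorite13_iff i)
  obtain ⟨h03, h04, h13, h21, h22, h24, h30, h32, h34, h40, h41, h43⟩ :
      x 0 3 = 0 ∧ x 0 4 = 0 ∧ x 1 3 = 0 ∧ x 2 1 = 0 ∧ x 2 2 = 0 ∧ x 2 4 = 0 ∧
      x 3 0 = 0 ∧ x 3 2 = 0 ∧ x 3 4 = 0 ∧ x 4 0 = 0 ∧ x 4 1 = 0 ∧ x 4 3 = 0 := by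
    refine ⟨hzero 0 3 ?_, hzero 0 4 ?_, hzero 1 3 ?_, hzero 2 1 ?_, hzero 2 2 ?_, hzero 2 4 ?_,
      hzero 3 0 ?_, hzero 3 2 ?_, hzero 3 4 ?_, hzero 4 0 ?_, hzero 4 1 ?_, hzero 4 3 ?_⟩ <;>
      simp [R13, rank13, worstEndowed13]
  have hfav1 : 1/2 ≤ x 1 4 := hfav 1
  have hfav2 : 1/2 ≤ x 2 0 := hfav 2
  have hfav3 : 1/2 ≤ x 3 1 := hfav 3
  have hfav4 : 1/2 ≤ x 4 4 := hfav 4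
  simp only [Fin.sum_univ_five] at hrow hcol
  refine ⟨x 0 0, x 0 1, funext fun i => funext fun h => ?_⟩
  fin_cases i <;> fin_cases h <;>
    simp only [irAssign13, Fin.zero_eta, Fin.mk_one, Fin.reduceFinMk, Fin.isValue, Matrix.cons_val',
      Matrix.cons_val, Matrix.cons_val_zero, Matrix.cons_val_one, Matrix.cons_val_fin_one] <;>
    linarith [hrow 0, hrow 1, hrow 2, hrow 3, hrow 4, hcol 0, hcol 1, hcol 2, hcol 3, hcol 4]

lemma irAssign13_add_eq_half_of_SDEfficient {a b : ℝ} (hx : IsAssignment e5 (irAssign13 a b))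
    (heff : SDEfficient R13 e5 (irAssign13 a b)) : a + b = 1/2 := by
  have h10 : 0 ≤ 1/2 - a := hx.1 1 0
  have h12 : 0 ≤ a + b - 1/2 := hx.1 1 2
  by_contra hne
  exact not_SDEfficient_of_trade R13_totalPreorderRel hx (i := 0) (j := 1) (a := 1) (b := 2)
    (by decide) (by simp [R13, rank13]) (by simp [R13, rank13])
    (lt_of_le_of_ne h12 (fun h => hne (by linarith))) (by show _ ≤ b; linarith) le_rfl heff

lemma irAssign13_half_sub (l : ℝ) : irAssign13 l (1/2 - l) = z13 l := by
  funext i h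
  fin_cases i <;> fin_cases h <;> norm_num [irAssign13, z13]

/-- every SD-individually rational and SD-efficient assignment for this
profile equals `z13 λ` for some λ ∈ [0, ½]; in particular agents 3, 4, 5 receive
exactly their endowments. -/
theorem ir_eff_assignments_characterized :
    ∀ x : Fin 5 → Fin 5 → ℝ, IsAssignment e5 x → SDIR R13 e5 x → SDEfficient R13 e5 x →
      (∃ l : ℝ, 0 ≤ l ∧ l ≤ 1/2 ∧ x = z13 l) ∧
      (x 2 = e5 2 ∧ x 3 = e5 3 ∧ x 4 = e5 4) := by
  intro x hx hir heff
  obtain ⟨a, b, rfl⟩ := exists_eq_irAssign13_of_SDIR hx hir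
  obtain rfl : b = 1/2 - a := eq_sub_of_add_eq' (irAssign13_add_eq_half_of_SDEfficient hx heff)
  rw [irAssign13_half_sub] at hx ⊢
  exact ⟨⟨a, hx.1 0 0, sub_nonneg.1 (hx.1 1 0), rfl⟩, rfl, rfl, rfl⟩
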